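/- Let Γ be a reflexive vertex-transitive relation on a finite set V, let v ∈ V, and let F ⊆ V with v ∈ F. Then |Γ(F)| ≥ |F| + |Γ(v)| − |Γ⁻(v) ∩ F|. -/

import Mathlib

open Set Pointwise

variable {V : Type*}

/-- Image of a set under the relation. -/
def img (Γ : V → Set V) (F : Set V) : Set V := ⋃ x ∈ F, Γ x
/-- Reverse relation. -/
def rev (Γ : V → Set V) : V → Set V := fun y => {x | y ∈ Γ x}
/-- Boundary ∂(F) = Γ(F) \ F. -/
def bd (Γ : V → Set V) (F : Set V) : Set V := img Γ F \ F
/-- ∇(F) = V \ (F ∪ Γ(F)). -/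
def nab (Γ : V → Set V) (F : Set V) : Set V := (F ∪ img Γ F)ᶜ
/-- Reflexive relation. -/
def Refl (Γ : V → Set V) : Prop := ∀ x, x ∈ Γ x
/-- Locally finite relation. -/
def LocFin (Γ : V → Set V) : Prop := ∀ x, (Γ x).Finite
/-- Automorphism of the relation. -/
def IsAuto (Γ : V → Set V) (φ : V ≃ V) : Prop := ∀ x, Γ (φ x) = φ '' Γ x
/-- Vertex-transitivity. -/
def VT (Γ : V → Set V) : Prop := ∀ x y : V, ∃ φ : V ≃ V, IsAuto Γ φ ∧ φ x = y
/-- A finite v-Moser set. -/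
def MoserSet (Γ : V → Set V) (v : V) (F : Set V) : Prop :=
  F.Finite ∧ v ∈ F ∧ rev Γ v ∩ F = {v}
/-- μ(v): minimum boundary size over v-Moser sets. -/
noncomputable def mu (Γ : V → Set V) (v : V) : ℕ :=
  sInf {n | ∃ F, MoserSet Γ v F ∧ (bd Γ F).ncard = n}
/-- A v-molecule: Moser set of minimum boundary. -/
def Molecule (Γ : V → Set V) (v : V) (F : Set V) : Prop :=
  MoserSet Γ v F ∧ (bd Γ F).ncard = mu Γ v
/-- The v-kernel: the unique minimal v-molecule. -/
def IsKernel (Γ : V → Set V) (v : V) (K : Set V) : Prop :=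
  Molecule Γ v K ∧ ∀ F, Molecule Γ v F → K ⊆ F
/-- Weak connectivity κ₀. -/
noncomputable def kappa0 (Γ : V → Set V) : ℕ :=
  sInf {n | ∃ X : Set V, X.Finite ∧ X.Nonempty ∧ (bd Γ X).ncard = n}
/-- Weak fragment. -/
def WeakFragment (Γ : V → Set V) (X : Set V) : Prop :=
  X.Finite ∧ X.Nonempty ∧ (bd Γ X).ncard = kappa0 Γ
/-- Weak atom: a weak fragment of minimum cardinality. -/
def WeakAtom (Γ : V → Set V) (X : Set V) : Prop :=
  WeakFragment Γ X ∧ ∀ Y, WeakFragment Γ Y → X.ncard ≤ Y.ncard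

/-
For a `v`-Moser set `F` (one with `Γ⁻(v) ∩ F = {v}`) the claim reads `|∂F| ≥ |Γ(v)| - 1`; the
general case follows by applying it to `{v} ∪ (F \ Γ⁻(v))`.

Since `X ↦ |∂X|` is submodular, the `v`-molecules (Moser sets of least boundary `μ(v)`) are closed
under union, so there is a greatest one, `M(v)`; being canonical, it is equivariant under
automorphisms. Call an arc `u → w` blind if `u ∉ Γ(M(w))`. Then `w ∉ M(u)`: otherwise, by
submodularity applied to `M(u) ∪ M(w)` and `M(u) ∩ M(w)`, the union is a `u`-molecule, so
`M(w) ⊆ M(u)`, and these have the same size, so `u ∈ M(w)`. Hence the heads of the blind arcs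
leaving `v` lie in `∂M(v) \ Γ⁻(v)`, while every in-neighbour of `v` other than `v` lies in `∂M(v)`
or is the tail of a blind arc into `v`. By vertex-transitivity and double counting, `v` is the tail
of as many blind arcs as it is the head of, so `|Γ⁻(v)| ≤ 1 + |∂M(v)| = 1 + μ(v)`, and
`|Γ⁻(v)| = |Γ(v)|` by double counting again.
-/

section Image

variable {Γ : V → Set V} {F G : Set V} {x : V}

lemma subset_img_of_mem (hx : x ∈ F) : Γ x ⊆ img Γ F :=
  subset_biUnion_of_mem hx

lemma subset_img (hr : Refl Γ) (F : Set V) : F ⊆ img Γ F :=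
  fun x hx => subset_img_of_mem hx (hr x)

lemma img_mono (h : F ⊆ G) : img Γ F ⊆ img Γ G :=
  biUnion_subset_biUnion_left h

lemma img_union : img Γ (F ∪ G) = img Γ F ∪ img Γ G :=
  biUnion_union F G Γ

variable [Finite V]

lemma ncard_img_eq (hr : Refl Γ) (F : Set V) : (img Γ F).ncard = F.ncard + (bd Γ F).ncard :=
  (ncard_sdiff_add_ncard_of_subset (subset_img hr F)).symm.trans (add_comm _ _)

lemma ncard_bd_union_add_ncard_bd_inter_le (hr : Refl Γ) (F G : Set V) :
    (bd Γ (F ∪ G)).ncard + (bd Γ (F ∩ G)).ncard ≤ (bd Γ F).ncard + (bd Γ G).ncard := by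
  have himg := ncard_union_add_ncard_inter (img Γ F) (img Γ G)
  have hinter : (img Γ (F ∩ G)).ncard ≤ (img Γ F ∩ img Γ G).ncard :=
    ncard_le_ncard (subset_inter (img_mono inter_subset_left) (img_mono inter_subset_right))
  have hsets := ncard_union_add_ncard_inter F G
  rw [← img_union] at himg
  simp only [ncard_img_eq hr] at himg hinter
  omega

end Image

section Automorphism

variable {Γ : V → Set V} {φ : V ≃ V}

lemma IsAuto.apply_mem_apply_iff (hφ : IsAuto Γ φ) {u w : V} : φ w ∈ Γ (φ u) ↔ w ∈ Γ u := by
  rw [hφ u]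
  exact φ.injective.mem_set_image

lemma IsAuto.symm (hφ : IsAuto Γ φ) : IsAuto Γ φ.symm := by
  intro x
  conv_rhs => rw [← φ.apply_symm_apply x, hφ, φ.symm_image_image]

lemma image_setOf_of_invariant {Q : V → V → Prop} (hQ : ∀ u w, Q (φ u) (φ w) ↔ Q u w)
    (u : V) : φ '' {w | Q u w} = {w | Q (φ u) w} := by
  ext t
  rw [mem_image_equiv, mem_ofPred_eq, mem_ofPred_eq, ← hQ, φ.apply_symm_apply]

lemma IsAuto.img_image (hφ : IsAuto Γ φ) (F : Set V) : img Γ (φ '' F) = φ '' img Γ F := by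
  simp only [img, biUnion_image, hφ _, image_iUnion₂]

lemma IsAuto.rev_apply (hφ : IsAuto Γ φ) (x : V) : rev Γ (φ x) = φ '' rev Γ x :=
  (image_setOf_of_invariant (Q := fun u w => u ∈ Γ w) (fun _ _ => hφ.apply_mem_apply_iff) x).symm

lemma IsAuto.bd_image (hφ : IsAuto Γ φ) (F : Set V) : bd Γ (φ '' F) = φ '' bd Γ F := by
  rw [bd, bd, hφ.img_image, image_sdiff φ.injective]

lemma MoserSet.image (hφ : IsAuto Γ φ) {x : V} {F : Set V} (h : MoserSet Γ x F) :
    MoserSet Γ (φ x) (φ '' F) :=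
  ⟨h.1.image φ, mem_image_of_mem φ h.2.1, by
    rw [hφ.rev_apply, ← image_inter φ.injective, h.2.2, image_singleton]⟩

end Automorphism

section Molecule

variable {Γ : V → Set V} {φ : V ≃ V} {v x : V} {F G : Set V}

lemma moserSet_singleton (hr : Refl Γ) (v : V) : MoserSet Γ v {v} :=
  ⟨finite_singleton v, rfl, inter_singleton_of_mem (hr v)⟩

lemma mu_le_ncard_bd (h : MoserSet Γ v F) : mu Γ v ≤ (bd Γ F).ncard :=
  Nat.sInf_le ⟨F, h, rfl⟩

lemma exists_molecule (hr : Refl Γ) (v : V) : ∃ F, Molecule Γ v F := by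
  obtain ⟨F, hF, hbd⟩ := Nat.sInf_mem (⟨_, {v}, moserSet_singleton hr v, rfl⟩ :
    {n | ∃ F, MoserSet Γ v F ∧ (bd Γ F).ncard = n}.Nonempty)
  exact ⟨F, hF, hbd⟩

lemma MoserSet.inter (hF : MoserSet Γ v F) (hG : MoserSet Γ v G) : MoserSet Γ v (F ∩ G) := by
  refine ⟨hF.1.inter_of_left G, ⟨hF.2.1, hG.2.1⟩, ?_⟩
  rw [← inter_assoc, hF.2.2, singleton_inter_of_mem hG.2.1]

lemma MoserSet.union (hF : MoserSet Γ v F) (hG : MoserSet Γ v G) : MoserSet Γ v (F ∪ G) :=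
  ⟨hF.1.union hG.1, Or.inl hF.2.1, by rw [inter_union_distrib_left, hF.2.2, hG.2.2, union_self]⟩

lemma IsAuto.mu_apply_le (hr : Refl Γ) (hφ : IsAuto Γ φ) (x : V) : mu Γ (φ x) ≤ mu Γ x := by
  obtain ⟨F, hF⟩ := exists_molecule hr x
  calc mu Γ (φ x) ≤ (bd Γ (φ '' F)).ncard := mu_le_ncard_bd (hF.1.image hφ)
    _ = mu Γ x := by rw [hφ.bd_image, ncard_image_of_injective _ φ.injective, hF.2]

lemma IsAuto.mu_apply (hr : Refl Γ) (hφ : IsAuto Γ φ) (x : V) : mu Γ (φ x) = mu Γ x := by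
  refine (hφ.mu_apply_le hr x).antisymm ?_
  simpa using hφ.symm.mu_apply_le hr (φ x)

lemma Molecule.image (hr : Refl Γ) (hφ : IsAuto Γ φ) (h : Molecule Γ x F) :
    Molecule Γ (φ x) (φ '' F) :=
  ⟨h.1.image hφ, by rw [hφ.bd_image, ncard_image_of_injective _ φ.injective, hφ.mu_apply hr, h.2]⟩

variable [Finite V]

lemma Molecule.union_of_moserSet (hr : Refl Γ) {w : V} (hF : Molecule Γ v F)
    (hG : Molecule Γ w G) (hunion : MoserSet Γ v (F ∪ G)) (hinter : MoserSet Γ w (F ∩ G)) :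
    Molecule Γ v (F ∪ G) := by
  refine ⟨hunion, le_antisymm ?_ (mu_le_ncard_bd hunion)⟩
  have hsubmod := ncard_bd_union_add_ncard_bd_inter_le hr F G
  have hmu := mu_le_ncard_bd hinter
  rw [hF.2, hG.2] at hsubmod
  omega

lemma Molecule.union (hr : Refl Γ) (hF : Molecule Γ v F) (hG : Molecule Γ v G) :
    Molecule Γ v (F ∪ G) :=
  hF.union_of_moserSet hr hG (hF.1.union hG.1) (hF.1.inter hG.1)

lemma exists_greatest_molecule (hr : Refl Γ) (v : V) :
    ∃ M, Molecule Γ v M ∧ ∀ F, Molecule Γ v F → F ⊆ M := by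
  obtain ⟨M, hM, hmax⟩ :=
    (toFinite {F | Molecule Γ v F}).exists_maximalFor ncard _ (exists_molecule hr v)
  refine ⟨M, hM, fun F hF => ?_⟩
  have hle : M.ncard ≤ (F ∪ M).ncard := ncard_le_ncard subset_union_right
  have hFM : M = F ∪ M :=
    eq_of_subset_of_ncard_le subset_union_right (hmax (hF.union hr hM) hle)
  exact hFM ▸ subset_union_left

end Molecule

noncomputable def maxMolecule (Γ : V → Set V) (v : V) : Set V := ⋃₀ {F | Molecule Γ v F}

section MaxMolecule

variable {Γ : V → Set V} {φ : V ≃ V} {v : V} {F : Set V}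

lemma subset_maxMolecule (h : Molecule Γ v F) : F ⊆ maxMolecule Γ v :=
  subset_sUnion_of_mem h

variable [Finite V]

lemma molecule_maxMolecule (hr : Refl Γ) (v : V) : Molecule Γ v (maxMolecule Γ v) := by
  obtain ⟨M, hM, hgreatest⟩ := exists_greatest_molecule hr v
  have : maxMolecule Γ v = M := (sUnion_subset hgreatest).antisymm (subset_maxMolecule hM)
  exact this ▸ hM

lemma mem_maxMolecule (hr : Refl Γ) (v : V) : v ∈ maxMolecule Γ v :=
  (molecule_maxMolecule hr v).1.2.1

lemma IsAuto.image_maxMolecule_subset (hr : Refl Γ) (hφ : IsAuto Γ φ) (x : V) :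
    φ '' maxMolecule Γ x ⊆ maxMolecule Γ (φ x) :=
  subset_maxMolecule ((molecule_maxMolecule hr x).image hr hφ)

lemma IsAuto.maxMolecule_apply (hr : Refl Γ) (hφ : IsAuto Γ φ) (x : V) :
    maxMolecule Γ (φ x) = φ '' maxMolecule Γ x := by
  refine subset_antisymm ?_ (hφ.image_maxMolecule_subset hr x)
  rw [← Equiv.symm_image_subset]
  simpa using hφ.symm.image_maxMolecule_subset hr (φ x)

end MaxMolecule

section DoubleCounting

variable {Γ : V → Set V}

lemma ncard_row_eq_ncard_col [Finite V] [Nonempty V] {Q : V → V → Prop} {r c : ℕ}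
    (hrow : ∀ u, {w | Q u w}.ncard = r) (hcol : ∀ w, {u | Q u w}.ncard = c) : r = c := by
  classical
  have := Fintype.ofFinite V
  have hcount := Finset.sum_card_bipartiteAbove_eq_sum_card_bipartiteBelow Q
    (s := Finset.univ) (t := Finset.univ)
  simp only [Finset.bipartiteAbove, Finset.bipartiteBelow, ← Set.toFinset_ofPred,
    ← ncard_eq_toFinset_card', hrow, hcol, Finset.sum_const, smul_eq_mul] at hcount
  exact Nat.eq_of_mul_eq_mul_left Finset.univ_nonempty.card_pos hcount

variable {Q : V → V → Prop}

lemma VT.ncard_setOf_eq (hvt : VT Γ) (hQ : ∀ φ, IsAuto Γ φ → ∀ u w, Q (φ u) (φ w) ↔ Q u w)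
    (u u' : V) : {w | Q u w}.ncard = {w | Q u' w}.ncard := by
  obtain ⟨φ, hφ, rfl⟩ := hvt u u'
  rw [← image_setOf_of_invariant (hQ φ hφ), ncard_image_of_injective _ φ.injective]

lemma VT.ncard_out_eq_ncard_in [Finite V] (hvt : VT Γ)
    (hQ : ∀ φ, IsAuto Γ φ → ∀ u w, Q (φ u) (φ w) ↔ Q u w) (v : V) :
    {w | Q v w}.ncard = {u | Q u v}.ncard := by
  have : Nonempty V := ⟨v⟩
  refine ncard_row_eq_ncard_col (fun u => hvt.ncard_setOf_eq hQ u v) (fun w => ?_)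
  exact hvt.ncard_setOf_eq (Q := fun a b => Q b a) (fun φ hφ u w => hQ φ hφ w u) w v

end DoubleCounting

def IsBlindArc (Γ : V → Set V) (u w : V) : Prop := w ∈ Γ u ∧ u ∉ img Γ (maxMolecule Γ w)

section BlindArc

variable [Finite V] {Γ : V → Set V} {u v w : V}

lemma IsAuto.isBlindArc_apply_iff (hr : Refl Γ) {φ : V ≃ V} (hφ : IsAuto Γ φ) :
    IsBlindArc Γ (φ u) (φ w) ↔ IsBlindArc Γ u w := by
  rw [IsBlindArc, IsBlindArc, hφ.apply_mem_apply_iff, hφ.maxMolecule_apply hr, hφ.img_image,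
    φ.injective.mem_set_image]

lemma notMem_maxMolecule_of_notMem_img (hr : Refl Γ) (hvt : VT Γ)
    (h : u ∉ img Γ (maxMolecule Γ w)) : w ∉ maxMolecule Γ u := by
  obtain ⟨φ, hφ, rfl⟩ := hvt u w
  have hcard : (maxMolecule Γ u).ncard ≤ (maxMolecule Γ (φ u)).ncard := by
    rw [hφ.maxMolecule_apply hr, ncard_image_of_injective _ φ.injective]
  intro hw
  set A := maxMolecule Γ u
  set B := maxMolecule Γ (φ u)
  have hA := molecule_maxMolecule hr u
  have hB := molecule_maxMolecule hr (φ u)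
  have hunion : MoserSet Γ u (A ∪ B) := by
    have hrevB : rev Γ u ∩ B = ∅ :=
      eq_empty_of_forall_notMem fun x hx => h (subset_img_of_mem hx.2 hx.1)
    refine ⟨toFinite _, Or.inl hA.1.2.1, ?_⟩
    rw [inter_union_distrib_left, hA.1.2.2, hrevB, union_empty]
  have hinter : MoserSet Γ (φ u) (A ∩ B) := by
    refine ⟨toFinite _, ⟨hw, hB.1.2.1⟩, ?_⟩
    rw [inter_left_comm, hB.1.2.2, inter_singleton_of_mem hw]
  have hBA : B ⊆ A :=
    subset_union_right.trans (subset_maxMolecule (hA.union_of_moserSet hr hB hunion hinter))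
  exact h (subset_img hr B (eq_of_subset_of_ncard_le hBA hcard ▸ mem_maxMolecule hr u))

lemma IsBlindArc.mem_bd (hr : Refl Γ) (hvt : VT Γ) (h : IsBlindArc Γ u w) :
    w ∈ bd Γ (maxMolecule Γ u) :=
  ⟨subset_img_of_mem (mem_maxMolecule hr u) h.1, notMem_maxMolecule_of_notMem_img hr hvt h.2⟩

lemma IsBlindArc.notMem_rev (hr : Refl Γ) (h : IsBlindArc Γ u w) : w ∉ rev Γ u :=
  fun hwu => h.2 (subset_img_of_mem (mem_maxMolecule hr w) hwu)

lemma ncard_rev_le_mu_add_one (hr : Refl Γ) (hvt : VT Γ) (v : V) :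
    (rev Γ v).ncard ≤ mu Γ v + 1 := by
  set A := maxMolecule Γ v
  have hA := molecule_maxMolecule hr v
  set B := rev Γ v ∩ bd Γ A
  have hcover : rev Γ v ⊆ insert v (B ∪ {z | IsBlindArc Γ z v}) := by
    intro z hz
    by_cases hzA : z ∈ A
    · exact Or.inl (hA.1.2.2.subset ⟨hz, hzA⟩)
    by_cases hz' : z ∈ img Γ A
    · exact Or.inr (Or.inl ⟨hz, hz', hzA⟩)
    · exact Or.inr (Or.inr ⟨hz, hz'⟩)
  have hdisj : Disjoint B {w | IsBlindArc Γ v w} :=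
    disjoint_left.2 fun w hwB hw => hw.notMem_rev hr hwB.1
  have hsub : B ∪ {w | IsBlindArc Γ v w} ⊆ bd Γ A :=
    union_subset inter_subset_right fun w hw => hw.mem_bd hr hvt
  have hblind : {w | IsBlindArc Γ v w}.ncard = {z | IsBlindArc Γ z v}.ncard :=
    hvt.ncard_out_eq_ncard_in (fun _ hφ _ _ => hφ.isBlindArc_apply_iff hr) v
  calc (rev Γ v).ncard ≤ (insert v (B ∪ {z | IsBlindArc Γ z v})).ncard := ncard_le_ncard hcover
    _ ≤ B.ncard + {z | IsBlindArc Γ z v}.ncard + 1 :=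
      (ncard_insert_le _ _).trans (Nat.add_le_add_right (ncard_union_le _ _) 1)
    _ = (B ∪ {w | IsBlindArc Γ v w}).ncard + 1 := by rw [ncard_union_eq hdisj, hblind]
    _ ≤ mu Γ v + 1 := Nat.add_le_add_right (hA.2 ▸ ncard_le_ncard hsub) 1

lemma ncard_apply_eq_ncard_rev (hvt : VT Γ) (v : V) : (Γ v).ncard = (rev Γ v).ncard :=
  hvt.ncard_out_eq_ncard_in (Q := fun u w => w ∈ Γ u) (fun _ hφ _ _ => hφ.apply_mem_apply_iff) v

lemma MoserSet.ncard_add_ncard_le (hr : Refl Γ) (hvt : VT Γ) {F : Set V} (hF : MoserSet Γ v F) :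
    F.ncard + (Γ v).ncard ≤ (img Γ F).ncard + 1 := by
  have := ncard_rev_le_mu_add_one hr hvt v
  have := mu_le_ncard_bd hF
  rw [ncard_img_eq hr, ncard_apply_eq_ncard_rev hvt]
  omega

end BlindArc

/-- Finite case of the main theorem. -/
theorem stmt10 {V : Type*} [Finite V] (Γ : V → Set V) (hr : Refl Γ) (hvt : VT Γ)
    (v : V) (F : Set V) (hvF : v ∈ F) :
    F.ncard + (Γ v).ncard - (rev Γ v ∩ F).ncard ≤ (img Γ F).ncard := by
  set F' := insert v (F \ rev Γ v)
  have hv : v ∈ rev Γ v := hr v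
  have hF' : MoserSet Γ v F' := ⟨toFinite _, mem_insert v _, by
    rw [inter_insert_of_mem hv, inter_sdiff_self, insert_empty_eq]⟩
  have hcardF' : F'.ncard = (F \ rev Γ v).ncard + 1 :=
    ncard_insert_of_notMem fun h => h.2 hv
  have hsplit := ncard_inter_add_ncard_sdiff_eq_ncard F (rev Γ v)
  have hmono : (img Γ F').ncard ≤ (img Γ F).ncard :=
    ncard_le_ncard (img_mono (insert_subset hvF sdiff_subset))
  have := hF'.ncard_add_ncard_le hr hvt
  rw [inter_comm] at hsplit
  omega
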